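/- arXiv:2308.01685 — 2 statements merged into one kernel-verified Lean document; each statement's English description precedes it below -/
import Mathlib

section
/- If G is a König–Egerváry graph (i.e., α(G) + μ(G) = n(G)), then a(G) - α(G) ≤ μ(G); moreover, if G has at least one edge, then a(G) - α(G) < μ(G). -/
/-!
Since `α(G) + μ(G) = n(G)`, both claims reduce to `a(G) ≤ n(G)`, with strict inequality when
`m(G) > 0`: the whole vertex set has degree sum `2 m(G) > m(G)`, so it is never admissible.
-/

open Finset

namespace AnnPaper

variable {V : Type*}

/-- A finset of vertices is independent: no two of its members are adjacent. -/
def IsIndepFinset (G : SimpleGraph V) (s : Finset V) : Prop :=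
  ∀ a ∈ s, ∀ b ∈ s, ¬ G.Adj a b

/-- The independence number `α(G)`. -/
noncomputable def indepNum (G : SimpleGraph V) : ℕ :=
  sSup {k | ∃ s : Finset V, IsIndepFinset G s ∧ s.card = k}

/-- A finset of edges is a matching: edges of `G`, pairwise vertex-disjoint. -/
def IsMatchingFinset (G : SimpleGraph V) (s : Finset (Sym2 V)) : Prop :=
  (↑s ⊆ G.edgeSet) ∧ ∀ e ∈ s, ∀ f ∈ s, e ≠ f → ∀ v : V, v ∈ e → v ∉ f

/-- The matching number `μ(G)`. -/
noncomputable def matchNum (G : SimpleGraph V) : ℕ :=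
  sSup {k | ∃ s : Finset (Sym2 V), IsMatchingFinset G s ∧ s.card = k}

/-- The number of edges `m(G)`. -/
noncomputable def edgeCount (G : SimpleGraph V) : ℕ := G.edgeSet.ncard

/-- The degree of a vertex. -/
noncomputable def deg (G : SimpleGraph V) (v : V) : ℕ := (G.neighborSet v).ncard

/-- The annihilation number `a(G)`: the largest `k` such that the sum of the `k`
smallest degrees is at most `m(G)`; equivalently, the largest cardinality of a
set of vertices whose degree sum is at most `m(G)`. -/
noncomputable def annNum (G : SimpleGraph V) : ℕ :=
  sSup {k | ∃ A : Finset V, A.card = k ∧ ∑ v ∈ A, deg G v ≤ edgeCount G}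

/-- The number of edges of the subgraph induced on a set of vertices. -/
noncomputable def inducedEdgeCount (G : SimpleGraph V) (A : Set V) : ℕ :=
  (SimpleGraph.induce A G).edgeSet.ncard

section

variable [Fintype V] (G : SimpleGraph V)

theorem deg_eq_degree [DecidableRel G.Adj] (v : V) : deg G v = G.degree v := by
  rw [deg, Set.ncard_eq_toFinset_card']
  rfl

theorem edgeCount_eq_card_edgeFinset [DecidableRel G.Adj] :
    edgeCount G = #G.edgeFinset := by
  rw [edgeCount, Set.ncard_eq_toFinset_card']
  exact congrArg Finset.card (by ext e; simp)

theorem sum_deg_eq_two_mul_edgeCount : ∑ v, deg G v = 2 * edgeCount G := by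
  classical
  simp only [deg_eq_degree, edgeCount_eq_card_edgeFinset]
  exact G.sum_degrees_eq_twice_card_edges

theorem exists_card_eq_annNum :
    ∃ A : Finset V, #A = annNum G ∧ ∑ v ∈ A, deg G v ≤ edgeCount G :=
  Nat.sSup_mem (s := {k | ∃ A : Finset V, #A = k ∧ ∑ v ∈ A, deg G v ≤ edgeCount G})
    ⟨0, ∅, by simp⟩ ⟨Fintype.card V, by rintro k ⟨A, rfl, -⟩; exact A.card_le_univ⟩

theorem annNum_le_card : annNum G ≤ Fintype.card V := by
  obtain ⟨A, hA, -⟩ := exists_card_eq_annNum G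
  exact hA ▸ A.card_le_univ

theorem annNum_lt_card (hm : 0 < edgeCount G) : annNum G < Fintype.card V := by
  obtain ⟨A, hA, hsum⟩ := exists_card_eq_annNum G
  rw [← hA, Finset.card_lt_iff_ne_univ]
  rintro rfl
  rw [sum_deg_eq_two_mul_edgeCount] at hsum
  omega

end

theorem stmt2 {V : Type*} [Fintype V] (G : SimpleGraph V)
    (hKE : indepNum G + matchNum G = Fintype.card V) :
    (annNum G : ℤ) - (indepNum G : ℤ) ≤ (matchNum G : ℤ) ∧
      (0 < edgeCount G → (annNum G : ℤ) - (indepNum G : ℤ) < (matchNum G : ℤ)) :=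
  ⟨by have := annNum_le_card G; omega,
   fun hm => by have := annNum_lt_card G hm; omega⟩

end AnnPaper
end

section
/- Let G be a bipartite graph with an annihilation decomposition ⟨A, B⟩ (A a maximum annihilating set of size a(G)). Then a(G) - α(G) ≤ m(G[A]), the number of edges in the subgraph induced by A. -/
open Finset

namespace AnnPaper

variable {V : Type*}

/-- Choosing one endpoint of every edge yields a vertex cover with at most `m(H)` vertices;
its complement is independent. -/
lemma exists_isIndepFinset_card_le_card_add_edgeCount {W : Type*} [Fintype W]
    (H : SimpleGraph W) :
    ∃ s : Finset W, IsIndepFinset H s ∧ Fintype.card W ≤ s.card + edgeCount H := by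
  classical
  set cover := H.edgeFinset.image fun e : Sym2 W => e.out.1
  refine ⟨univ \ cover, ?_, ?_⟩
  · intro u hu v hv huv
    have hedge : s(u, v) ∈ H.edgeFinset := H.mem_edgeFinset.2 huv
    have hcover : (s(u, v)).out.1 ∈ cover := mem_image_of_mem _ hedge
    rcases Sym2.mem_iff.1 (Sym2.out_fst_mem s(u, v)) with h | h <;> rw [h] at hcover
    exacts [(mem_sdiff.1 hu).2 hcover, (mem_sdiff.1 hv).2 hcover]
  · have hcover : cover.card ≤ edgeCount H := by
      rw [edgeCount, Set.ncard_eq_toFinset_card', Set.toFinset_card, ← SimpleGraph.edgeFinset_card]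
      exact card_image_le
    have := card_univ_sdiff cover
    omega

lemma IsIndepFinset.map {W : Type*} {G : SimpleGraph V} {s : Finset W} (f : W ↪ V)
    (hs : IsIndepFinset (G.comap f) s) : IsIndepFinset G (s.map f) := by
  simp only [IsIndepFinset, mem_map]
  rintro _ ⟨u, hu, rfl⟩ _ ⟨v, hv, rfl⟩
  exact hs u hu v hv

lemma card_le_indepNum [Fintype V] {G : SimpleGraph V} {s : Finset V}
    (hs : IsIndepFinset G s) : s.card ≤ indepNum G :=
  le_csSup ⟨Fintype.card V, by rintro _ ⟨t, -, rfl⟩; exact card_le_univ t⟩ ⟨s, hs, rfl⟩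

theorem stmt5_general {V : Type*} [Fintype V] (G : SimpleGraph V)
    (A : Finset V) (hcard : A.card = annNum G) :
    (annNum G : ℤ) - (indepNum G : ℤ) ≤ (inducedEdgeCount G (↑A : Set V) : ℤ) := by
  obtain ⟨s, hs, hsA⟩ := exists_isIndepFinset_card_le_card_add_edgeCount (G.induce (↑A : Set V))
  have hα := card_le_indepNum (hs.map (Function.Embedding.subtype _))
  rw [card_map] at hα
  have hA : Fintype.card (↑A : Set V) = annNum G := (Fintype.card_coe A).trans hcard
  unfold edgeCount at hsA
  unfold inducedEdgeCount
  omega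

theorem stmt5 {V : Type*} [Fintype V] (G : SimpleGraph V) (hbip : G.Colorable 2)
    (A : Finset V) (hcard : A.card = annNum G)
    (hdeg : ∑ v ∈ A, deg G v ≤ edgeCount G) :
    (annNum G : ℤ) - (indepNum G : ℤ) ≤ (inducedEdgeCount G (↑A : Set V) : ℤ) :=
  stmt5_general G A hcard

end AnnPaper
end
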